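/- arXiv:2007.06224 — 3 statements merged into one kernel-verified Lean document; each statement's English description precedes it below -/
import Mathlib

section
/- Let X be a finite set of positive integers, and for each n ∈ X let b(n) and c(n) be real numbers with c(n) ≥ 0. Assume there exist real numbers M > 0 and V > 0 such that Σ_{n∈X} c(n) ≤ M ≤ Σ_{n∈X} b(n) and Σ_{n∈X} b(n)² ≤ V. Then the number of elements n ∈ X with b(n) > c(n) is at least (M − Σ_{n∈X} c(n))² / V. -/
/-- If `X` is a finite set of positive integers, `c ≥ 0` on `X`,
`∑ c ≤ M ≤ ∑ b` with `M > 0`, and `∑ b² ≤ V` with `V > 0`, then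
`|{n ∈ X : b(n) > c(n)}| ≥ (M - ∑ c)² / V`. -/
theorem stmt_1 (X : Finset ℕ) (hX : ∀ n ∈ X, 0 < n) (b c : ℕ → ℝ)
    (hc : ∀ n ∈ X, 0 ≤ c n) (M V : ℝ) (hM : 0 < M) (hV : 0 < V)
    (h₁ : ∑ n ∈ X, c n ≤ M) (h₂ : M ≤ ∑ n ∈ X, b n)
    (h₃ : ∑ n ∈ X, (b n) ^ 2 ≤ V) :
    (M - ∑ n ∈ X, c n) ^ 2 / V ≤ ((X.filter (fun n => c n < b n)).card : ℝ) := by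
  set S := X.filter (fun n => c n < b n) with hS
  have hSsub : S ⊆ X := Finset.filter_subset _ _
  have key1 : M - ∑ n ∈ X, c n ≤ ∑ n ∈ S, b n := by
    have h4 : M - ∑ n ∈ X, c n ≤ ∑ n ∈ X, (b n - c n) := by
      rw [Finset.sum_sub_distrib]; linarith
    have h5 : ∑ n ∈ X, (b n - c n) ≤ ∑ n ∈ S, (b n - c n) := by
      rw [← Finset.sum_filter_add_sum_filter_not X (fun n => c n < b n)]
      have : ∑ n ∈ X.filter (fun n => ¬ c n < b n), (b n - c n) ≤ 0 := by
        apply Finset.sum_nonpos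
        intro i hi
        simp only [Finset.mem_filter, not_lt] at hi
        linarith [hi.2]
      linarith
    have h6 : ∑ n ∈ S, (b n - c n) ≤ ∑ n ∈ S, b n := by
      apply Finset.sum_le_sum
      intro i hi
      have := hc i (hSsub hi)
      linarith
    linarith
  have key2 : (∑ n ∈ S, b n) ^ 2 ≤ (S.card : ℝ) * V := by
    calc (∑ n ∈ S, b n) ^ 2 ≤ (S.card : ℝ) * ∑ n ∈ S, (b n) ^ 2 :=
          sq_sum_le_card_mul_sum_sq
      _ ≤ (S.card : ℝ) * V := by
          apply mul_le_mul_of_nonneg_left _ (by positivity)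
          calc ∑ n ∈ S, (b n) ^ 2 ≤ ∑ n ∈ X, (b n) ^ 2 :=
                Finset.sum_le_sum_of_subset_of_nonneg hSsub (fun i _ _ => sq_nonneg _)
            _ ≤ V := h₃
  have hnn : 0 ≤ M - ∑ n ∈ X, c n := by linarith
  rw [div_le_iff₀ hV]
  calc (M - ∑ n ∈ X, c n) ^ 2 ≤ (∑ n ∈ S, b n) ^ 2 := by
        apply pow_le_pow_left₀ hnn key1
    _ ≤ (S.card : ℝ) * V := key2
end

section
/- Let X be a nonempty finite set, b : X → ℝ a function, and m ≥ 0 a real number. Set S₁ = Σ_{a∈X} b(a), S₂ = Σ_{a∈X} b(a)², S₄ = Σ_{a∈X} b(a)⁴, and assume S₂ > 0 and S₄ > 0. Define M₀ = (S₂^{3/2}/S₄^{1/2} + S₁)/2 and assume m·|X| ≤ M₀. Then the number of elements a ∈ X with b(a) > m is at least (M₀ − m·|X|)² / S₂. -/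
/-- Finitary counting principle: for `b : X → ℝ` on a nonempty finite set `X`,
with `S₁ = ∑ b`, `S₂ = ∑ b² > 0`, `S₄ = ∑ b⁴ > 0`, `M₀ = (S₂^{3/2}/S₄^{1/2} + S₁)/2`
and `0 ≤ m` with `m·|X| ≤ M₀`, the number of `a ∈ X` with `b(a) > m` is at least
`(M₀ - m·|X|)² / S₂`. -/
theorem stmt_4 {ι : Type*} (X : Finset ι) (hX : X.Nonempty) (b : ι → ℝ)
    (m : ℝ) (hm : 0 ≤ m)
    (hS₂ : 0 < ∑ a ∈ X, (b a) ^ 2) (hS₄ : 0 < ∑ a ∈ X, (b a) ^ 4)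
    (hmM : m * X.card ≤
      ((∑ a ∈ X, (b a) ^ 2) ^ ((3 : ℝ) / 2) / (∑ a ∈ X, (b a) ^ 4) ^ ((1 : ℝ) / 2)
        + ∑ a ∈ X, b a) / 2) :
    (((∑ a ∈ X, (b a) ^ 2) ^ ((3 : ℝ) / 2) / (∑ a ∈ X, (b a) ^ 4) ^ ((1 : ℝ) / 2)
        + ∑ a ∈ X, b a) / 2 - m * X.card) ^ 2 / (∑ a ∈ X, (b a) ^ 2)
      ≤ ((X.filter (fun a => m < b a)).card : ℝ) := by
  set S₁ := ∑ a ∈ X, b a with hS1def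
  set S₂ := ∑ a ∈ X, (b a) ^ 2 with hS2def
  set S₄ := ∑ a ∈ X, (b a) ^ 4 with hS4def
  set A := ∑ a ∈ X, |b a| with hAdef
  set B := ∑ a ∈ X, |b a| ^ 3 with hBdef
  have hA0 : 0 ≤ A := Finset.sum_nonneg fun i _ => abs_nonneg _
  have hB0 : 0 ≤ B := Finset.sum_nonneg fun i _ => by positivity
  -- Cauchy–Schwarz 1 : S₂² ≤ A * B
  have cs1 : S₂ ^ 2 ≤ A * B := by
    have h := Finset.sum_mul_sq_le_sq_mul_sq X (fun a => Real.sqrt |b a|)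
      (fun a => |b a| * Real.sqrt |b a|)
    have e1 : ∀ a ∈ X, Real.sqrt |b a| * (|b a| * Real.sqrt |b a|) = (b a) ^ 2 := by
      intro a _
      rw [show Real.sqrt |b a| * (|b a| * Real.sqrt |b a|)
          = Real.sqrt |b a| * Real.sqrt |b a| * |b a| by ring,
        Real.mul_self_sqrt (abs_nonneg _), abs_mul_abs_self, sq]
    have e2 : ∀ a ∈ X, Real.sqrt |b a| ^ 2 = |b a| := by
      intro a _; exact Real.sq_sqrt (abs_nonneg _)
    have e3 : ∀ a ∈ X, (|b a| * Real.sqrt |b a|) ^ 2 = |b a| ^ 3 := by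
      intro a _
      rw [mul_pow, Real.sq_sqrt (abs_nonneg _)]; ring
    rw [Finset.sum_congr rfl e1, Finset.sum_congr rfl e2, Finset.sum_congr rfl e3] at h
    exact h
  -- Cauchy–Schwarz 2 : B² ≤ S₂ * S₄
  have cs2 : B ^ 2 ≤ S₂ * S₄ := by
    have h := Finset.sum_mul_sq_le_sq_mul_sq X (fun a => |b a|) (fun a => (b a) ^ 2)
    have e1 : ∀ a ∈ X, |b a| * (b a) ^ 2 = |b a| ^ 3 := by
      intro a _; rw [← sq_abs]; ring
    have e2 : ∀ a ∈ X, |b a| ^ 2 = (b a) ^ 2 := fun a _ => sq_abs _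
    have e3 : ∀ a ∈ X, ((b a) ^ 2) ^ 2 = (b a) ^ 4 := fun a _ => by ring
    rw [Finset.sum_congr rfl e1, Finset.sum_congr rfl e2, Finset.sum_congr rfl e3] at h
    exact h
  -- Hölder : S₂³ ≤ A² * S₄
  have key : S₂ ^ 3 ≤ A ^ 2 * S₄ := by
    have h4 : S₂ ^ 4 ≤ A ^ 2 * (S₂ * S₄) := by nlinarith [cs1, cs2, hA0, hB0, hS₂]
    nlinarith [h4, hS₂]
  -- rpow step : S₂^{3/2}/S₄^{1/2} ≤ A
  have hrpow : S₂ ^ ((3 : ℝ) / 2) / S₄ ^ ((1 : ℝ) / 2) ≤ A := by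
    rw [div_le_iff₀ (Real.rpow_pos_of_pos hS₄ _)]
    have h1 : S₂ ^ ((3 : ℝ) / 2) = (S₂ ^ 3) ^ ((1 : ℝ) / 2) := by
      rw [← Real.rpow_natCast S₂ 3, ← Real.rpow_mul hS₂.le]; norm_num
    have h2 : A * S₄ ^ ((1 : ℝ) / 2) = (A ^ 2 * S₄) ^ ((1 : ℝ) / 2) := by
      rw [Real.mul_rpow (sq_nonneg A) hS₄.le, ← Real.rpow_natCast A 2,
        ← Real.rpow_mul hA0]
      norm_num
    rw [h1, h2]
    exact Real.rpow_le_rpow (by positivity) key (by norm_num)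
  set M₀ := (S₂ ^ ((3 : ℝ) / 2) / S₄ ^ ((1 : ℝ) / 2) + S₁) / 2 with hM0def
  set T := X.filter (fun a => m < b a) with hTdef
  have hc0 : 0 ≤ M₀ - m * X.card := by linarith
  -- M₀ ≤ ∑ (|b|+b)/2
  have hM0le : M₀ ≤ ∑ a ∈ X, (|b a| + b a) / 2 := by
    have : ∑ a ∈ X, (|b a| + b a) / 2 = (A + S₁) / 2 := by
      rw [hAdef, hS1def, ← Finset.sum_add_distrib, ← Finset.sum_div]
    rw [this]
    rw [hM0def]
    linarith
  -- ∑_X ((|b|+b)/2 - m) ≤ ∑_T b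
  have hsplit : ∑ a ∈ X, ((|b a| + b a) / 2 - m) ≤ ∑ a ∈ T, b a := by
    rw [← Finset.sum_filter_add_sum_filter_not X (fun a => m < b a)
      (fun a => (|b a| + b a) / 2 - m)]
    have h1 : ∑ a ∈ X.filter (fun a => m < b a), ((|b a| + b a) / 2 - m)
        ≤ ∑ a ∈ T, b a := by
      apply Finset.sum_le_sum
      intro a ha
      have hma : m < b a := (Finset.mem_filter.mp ha).2
      have : |b a| = b a := abs_of_pos (lt_of_le_of_lt hm hma)
      rw [this]; linarith
    have h2 : ∑ a ∈ X.filter (fun a => ¬ m < b a), ((|b a| + b a) / 2 - m) ≤ 0 := by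
      apply Finset.sum_nonpos
      intro a ha
      have hma : b a ≤ m := le_of_not_gt (Finset.mem_filter.mp ha).2
      rcases le_or_gt (b a) 0 with h | h
      · have : |b a| = -(b a) := abs_of_nonpos h
        rw [this]; linarith
      · have : |b a| = b a := abs_of_pos h
        rw [this]; linarith
    linarith
  have hcle : M₀ - m * X.card ≤ ∑ a ∈ T, b a := by
    have : ∑ a ∈ X, ((|b a| + b a) / 2 - m) = (∑ a ∈ X, (|b a| + b a) / 2) - m * X.card := by
      rw [Finset.sum_sub_distrib, Finset.sum_const, nsmul_eq_mul, mul_comm]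
    linarith [hsplit, hM0le, this ▸ hsplit]
  -- Cauchy–Schwarz on T
  have csT : (∑ a ∈ T, b a) ^ 2 ≤ (T.card : ℝ) * ∑ a ∈ T, (b a) ^ 2 := by
    have h := Finset.sum_mul_sq_le_sq_mul_sq T (fun _ => (1 : ℝ)) b
    simpa using h
  have hTS : ∑ a ∈ T, (b a) ^ 2 ≤ S₂ := by
    apply Finset.sum_le_sum_of_subset_of_nonneg (Finset.filter_subset _ _)
    intro a _ _; positivity
  have hfinal : (M₀ - m * X.card) ^ 2 ≤ (T.card : ℝ) * S₂ := by
    have h1 : (M₀ - m * X.card) ^ 2 ≤ (∑ a ∈ T, b a) ^ 2 :=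
      pow_le_pow_left₀ hc0 hcle 2
    have hT0 : (0 : ℝ) ≤ (T.card : ℝ) := Nat.cast_nonneg _
    nlinarith [csT, hTS]
  rw [div_le_iff₀ hS₂]
  linarith [hfinal]
end

section
/- Let m₁, m₂, m₃, m₄ be positive integers and e₁, e₂, e₃, e₄ ∈ {1, −1}, and suppose e₁·√m₁ + e₂·√m₂ + e₃·√m₃ + e₄·√m₄ = 0 (as real numbers). For each i write mᵢ = tᵢ·rᵢ² with tᵢ squarefree and rᵢ a positive integer. Then the set {t₁, t₂, t₃, t₄} has at most 2 elements. -/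
private lemma sqf_eq_of_mul_sq {s t k : ℕ} (hs : Squarefree s) (ht : Squarefree t)
    (h : s * t = k ^ 2) : s = t := by
  have hs0 : s ≠ 0 := hs.ne_zero
  obtain ⟨s', hs'⟩ := Nat.gcd_dvd_left s t
  obtain ⟨t', ht'⟩ := Nat.gcd_dvd_right s t
  set g := Nat.gcd s t with hg
  have hg0 : 0 < g := Nat.gcd_pos_of_pos_left _ (Nat.pos_of_ne_zero hs0)
  have cop : Nat.Coprime s' t' := by
    have h1 := Nat.coprime_div_gcd_div_gcd (m := s) (n := t) hg0
    have e1 : s / g = s' := by rw [hs']; exact Nat.mul_div_cancel_left _ hg0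
    have e2 : t / g = t' := by rw [ht']; exact Nat.mul_div_cancel_left _ hg0
    rwa [e1, e2] at h1
  obtain ⟨j, hj⟩ : g ∣ k := by
    have h2 : g ^ 2 ∣ k ^ 2 := ⟨s' * t', by rw [← h, hs', ht']; ring⟩
    exact (Nat.pow_dvd_pow_iff two_ne_zero).mp h2
  have hst' : s' * t' = j ^ 2 := by
    have h2 : g ^ 2 * (s' * t') = g ^ 2 * j ^ 2 := by
      calc g ^ 2 * (s' * t') = s * t := by rw [hs', ht']; ring
        _ = k ^ 2 := h
        _ = g ^ 2 * j ^ 2 := by rw [hj]; ring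
    exact Nat.eq_of_mul_eq_mul_left (by positivity) h2
  have hs'sf : Squarefree s' := hs.squarefree_of_dvd ⟨g, by rw [hs']; ring⟩
  have ht'sf : Squarefree t' := ht.squarefree_of_dvd ⟨g, by rw [ht']; ring⟩
  have hu : IsUnit (gcd s' t') := by rw [Nat.isUnit_iff]; exact cop
  have hu' : IsUnit (gcd t' s') := by rw [Nat.isUnit_iff]; exact cop.symm
  obtain ⟨d, hd⟩ := exists_eq_pow_of_mul_eq_pow hu hst'
  obtain ⟨d', hd'⟩ := exists_eq_pow_of_mul_eq_pow hu' (by rw [← hst']; ring : t' * s' = j ^ 2)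
  have hds : s' = 1 := by
    have hud : IsUnit d := hs'sf d (by rw [hd, pow_two])
    rw [hd, Nat.isUnit_iff.mp hud, one_pow]
  have hdt : t' = 1 := by
    have hud : IsUnit d' := ht'sf d' (by rw [hd', pow_two])
    rw [hd', Nat.isUnit_iff.mp hud, one_pow]
  rw [hs', ht', hds, hdt]

private lemma sq_of_int_sqrt (N : ℕ) (a b : ℤ) (hb : b ≠ 0)
    (h : (b : ℝ) * Real.sqrt N = a) : ∃ k : ℕ, N = k ^ 2 := by
  have hNsq : (Real.sqrt N) ^ 2 = (N : ℝ) := Real.sq_sqrt (by positivity)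
  have h2 : ((b : ℝ)) ^ 2 * N = (a : ℝ) ^ 2 := by
    calc ((b : ℝ)) ^ 2 * N = ((b : ℝ) * Real.sqrt N) ^ 2 := by rw [mul_pow, hNsq]
    _ = (a : ℝ) ^ 2 := by rw [h]
  have h3 : b ^ 2 * (N : ℤ) = a ^ 2 := by exact_mod_cast h2
  obtain ⟨c, hc⟩ : b ∣ a := (Int.pow_dvd_pow_iff two_ne_zero).mp ⟨N, h3.symm⟩
  have hN : (N : ℤ) = c ^ 2 := by
    have : b ^ 2 * (N : ℤ) = b ^ 2 * c ^ 2 := by rw [h3, hc]; ring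
    exact mul_left_cancel₀ (pow_ne_zero _ hb) this
  refine ⟨c.natAbs, ?_⟩
  have := congrArg Int.natAbs hN
  simpa [Int.natAbs_pow] using this

private lemma t_eq {t t' r r' k : ℕ} (ht : Squarefree t) (ht' : Squarefree t')
    (hr : 0 < r) (hr' : 0 < r') (hk : t * r ^ 2 * (t' * r' ^ 2) = k ^ 2) : t = t' := by
  have h1 : (r * r') ^ 2 * (t * t') = k ^ 2 := by rw [← hk]; ring
  obtain ⟨j, hj⟩ : r * r' ∣ k :=
    (Nat.pow_dvd_pow_iff two_ne_zero).mp ⟨t * t', h1.symm⟩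
  have h3 : t * t' = j ^ 2 := by
    have h2 : (r * r') ^ 2 * (t * t') = (r * r') ^ 2 * j ^ 2 := by rw [h1, hj]; ring
    exact Nat.eq_of_mul_eq_mul_left (by positivity) h2
  exact sqf_eq_of_mul_sq ht ht' h3

private lemma card_helper {a b c d : ℕ}
    (h : (a = b ∧ c = d) ∨ (a = c ∧ b = d) ∨ (a = d ∧ b = c)) :
    ({a, b, c, d} : Finset ℕ).card ≤ 2 := by
  have hsub : ∀ x y : ℕ, ({a, b, c, d} : Finset ℕ) ⊆ {x, y} →
      ({a, b, c, d} : Finset ℕ).card ≤ 2 := by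
    intro x y hxy
    calc ({a, b, c, d} : Finset ℕ).card ≤ ({x, y} : Finset ℕ).card :=
          Finset.card_le_card hxy
      _ ≤ 2 := (Finset.card_insert_le _ _).trans (by simp)
  rcases h with ⟨rfl, rfl⟩ | ⟨rfl, rfl⟩ | ⟨rfl, rfl⟩
  · exact hsub a c (by intro x hx; simp at hx ⊢; tauto)
  · exact hsub a b (by intro x hx; simp at hx ⊢; tauto)
  · exact hsub a b (by intro x hx; simp at hx ⊢; tauto)

/-- If `m₁, m₂, m₃, m₄` are positive integers with squarefree decompositions
`mᵢ = tᵢ rᵢ²`, and `e₁ √m₁ + e₂ √m₂ + e₃ √m₃ + e₄ √m₄ = 0` for signs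
`eᵢ ∈ {1, -1}`, then `{t₁, t₂, t₃, t₄}` has at most two elements. -/
theorem stmt_9 (m₁ m₂ m₃ m₄ t₁ t₂ t₃ t₄ r₁ r₂ r₃ r₄ : ℕ)
    (hm₁ : 0 < m₁) (hm₂ : 0 < m₂) (hm₃ : 0 < m₃) (hm₄ : 0 < m₄)
    (ht₁ : Squarefree t₁) (ht₂ : Squarefree t₂) (ht₃ : Squarefree t₃) (ht₄ : Squarefree t₄)
    (hr₁ : 0 < r₁) (hr₂ : 0 < r₂) (hr₃ : 0 < r₃) (hr₄ : 0 < r₄)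
    (hd₁ : m₁ = t₁ * r₁ ^ 2) (hd₂ : m₂ = t₂ * r₂ ^ 2)
    (hd₃ : m₃ = t₃ * r₃ ^ 2) (hd₄ : m₄ = t₄ * r₄ ^ 2)
    (e₁ e₂ e₃ e₄ : ℤ) (he₁ : e₁ = 1 ∨ e₁ = -1) (he₂ : e₂ = 1 ∨ e₂ = -1)
    (he₃ : e₃ = 1 ∨ e₃ = -1) (he₄ : e₄ = 1 ∨ e₄ = -1)
    (h : (e₁ : ℝ) * Real.sqrt m₁ + (e₂ : ℝ) * Real.sqrt m₂
        + (e₃ : ℝ) * Real.sqrt m₃ + (e₄ : ℝ) * Real.sqrt m₄ = 0) :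
    ({t₁, t₂, t₃, t₄} : Finset ℕ).card ≤ 2 := by
  have hP2 : (Real.sqrt ((m₁ : ℝ) * m₂)) ^ 2 = (m₁ : ℝ) * m₂ := Real.sq_sqrt (by positivity)
  have hQ2 : (Real.sqrt ((m₃ : ℝ) * m₄)) ^ 2 = (m₃ : ℝ) * m₄ := Real.sq_sqrt (by positivity)
  have hA2 : (Real.sqrt (m₁ : ℝ)) ^ 2 = (m₁ : ℝ) := Real.sq_sqrt (by positivity)
  have hB2 : (Real.sqrt (m₂ : ℝ)) ^ 2 = (m₂ : ℝ) := Real.sq_sqrt (by positivity)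
  have hC2 : (Real.sqrt (m₃ : ℝ)) ^ 2 = (m₃ : ℝ) := Real.sq_sqrt (by positivity)
  have hD2 : (Real.sqrt (m₄ : ℝ)) ^ 2 = (m₄ : ℝ) := Real.sq_sqrt (by positivity)
  have hABP : Real.sqrt (m₁ : ℝ) * Real.sqrt (m₂ : ℝ) = Real.sqrt ((m₁ : ℝ) * m₂) :=
    (Real.sqrt_mul (by positivity) _).symm
  have hCDQ : Real.sqrt (m₃ : ℝ) * Real.sqrt (m₄ : ℝ) = Real.sqrt ((m₃ : ℝ) * m₄) :=
    (Real.sqrt_mul (by positivity) _).symm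
  have he₁2 : (e₁ : ℝ) ^ 2 = 1 := by rcases he₁ with rfl | rfl <;> norm_num
  have he₂2 : (e₂ : ℝ) ^ 2 = 1 := by rcases he₂ with rfl | rfl <;> norm_num
  have he₃2 : (e₃ : ℝ) ^ 2 = 1 := by rcases he₃ with rfl | rfl <;> norm_num
  have he₄2 : (e₄ : ℝ) ^ 2 = 1 := by rcases he₄ with rfl | rfl <;> norm_num
  have hu2 : ((e₁ : ℝ) * e₂) ^ 2 = 1 := by rw [mul_pow, he₁2, he₂2]; norm_num
  have hv2 : ((e₃ : ℝ) * e₄) ^ 2 = 1 := by rw [mul_pow, he₃2, he₄2]; norm_num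
  have hsum : (e₁ : ℝ) * Real.sqrt m₁ + (e₂ : ℝ) * Real.sqrt m₂
      = -((e₃ : ℝ) * Real.sqrt m₃ + (e₄ : ℝ) * Real.sqrt m₄) := by linarith
  have hsq : ((e₁ : ℝ) * Real.sqrt m₁ + (e₂ : ℝ) * Real.sqrt m₂) ^ 2
      = ((e₃ : ℝ) * Real.sqrt m₃ + (e₄ : ℝ) * Real.sqrt m₄) ^ 2 := by rw [hsum]; ring
  have key : (m₁ : ℝ) + m₂ + 2 * ((e₁ : ℝ) * e₂) * Real.sqrt ((m₁ : ℝ) * m₂)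
      = (m₃ : ℝ) + m₄ + 2 * ((e₃ : ℝ) * e₄) * Real.sqrt ((m₃ : ℝ) * m₄) := by
    have l1 : ((e₁ : ℝ) * Real.sqrt m₁ + (e₂ : ℝ) * Real.sqrt m₂) ^ 2
        = (m₁ : ℝ) + m₂ + 2 * ((e₁ : ℝ) * e₂) * Real.sqrt ((m₁ : ℝ) * m₂) := by
      have expand : ((e₁ : ℝ) * Real.sqrt m₁ + (e₂ : ℝ) * Real.sqrt m₂) ^ 2
          = (e₁ : ℝ) ^ 2 * (Real.sqrt (m₁ : ℝ)) ^ 2 + (e₂ : ℝ) ^ 2 * (Real.sqrt (m₂ : ℝ)) ^ 2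
            + 2 * ((e₁ : ℝ) * e₂) * (Real.sqrt (m₁ : ℝ) * Real.sqrt (m₂ : ℝ)) := by ring
      rw [expand, he₁2, he₂2, hA2, hB2, hABP]; ring
    have l2 : ((e₃ : ℝ) * Real.sqrt m₃ + (e₄ : ℝ) * Real.sqrt m₄) ^ 2
        = (m₃ : ℝ) + m₄ + 2 * ((e₃ : ℝ) * e₄) * Real.sqrt ((m₃ : ℝ) * m₄) := by
      have expand : ((e₃ : ℝ) * Real.sqrt m₃ + (e₄ : ℝ) * Real.sqrt m₄) ^ 2
          = (e₃ : ℝ) ^ 2 * (Real.sqrt (m₃ : ℝ)) ^ 2 + (e₄ : ℝ) ^ 2 * (Real.sqrt (m₄ : ℝ)) ^ 2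
            + 2 * ((e₃ : ℝ) * e₄) * (Real.sqrt (m₃ : ℝ) * Real.sqrt (m₄ : ℝ)) := by ring
      rw [expand, he₃2, he₄2, hC2, hD2, hCDQ]; ring
    rw [← l1, ← l2, hsq]
  set n : ℤ := (m₃ : ℤ) + m₄ - m₁ - m₂ with hn
  have key2 : 2 * ((e₁ : ℝ) * e₂) * Real.sqrt ((m₁ : ℝ) * m₂)
      - 2 * ((e₃ : ℝ) * e₄) * Real.sqrt ((m₃ : ℝ) * m₄) = (n : ℝ) := by
    rw [hn]; push_cast; linarith
  by_cases h0 : n = 0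
  · -- the two pairs multiply to equal products
    have key3 : 2 * ((e₁ : ℝ) * e₂) * Real.sqrt ((m₁ : ℝ) * m₂)
        - 2 * ((e₃ : ℝ) * e₄) * Real.sqrt ((m₃ : ℝ) * m₄) = 0 := by
      rw [key2, h0]; norm_num
    have hPQ : (Real.sqrt ((m₁ : ℝ) * m₂)) ^ 2 = (Real.sqrt ((m₃ : ℝ) * m₄)) ^ 2 := by
      linear_combination (((e₁ : ℝ) * e₂) * Real.sqrt ((m₁ : ℝ) * m₂) / 2
          + ((e₃ : ℝ) * e₄) * Real.sqrt ((m₃ : ℝ) * m₄) / 2) * key3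
        - (Real.sqrt ((m₁ : ℝ) * m₂)) ^ 2 * hu2 + (Real.sqrt ((m₃ : ℝ) * m₄)) ^ 2 * hv2
    have hprodR : (m₁ : ℝ) * m₂ = (m₃ : ℝ) * m₄ := by rw [← hP2, ← hQ2, hPQ]
    have hprod : m₁ * m₂ = m₃ * m₄ := by exact_mod_cast hprodR
    have hnn : (m₃ : ℤ) + m₄ - m₁ - m₂ = 0 := by rw [← hn]; exact h0
    have hsum' : m₁ + m₂ = m₃ + m₄ := by omega
    have hz : ((m₃ : ℤ) - m₁) * ((m₃ : ℤ) - m₂) = 0 := by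
      have h1 : (m₁ : ℤ) * m₂ = (m₃ : ℤ) * m₄ := by exact_mod_cast hprod
      have h2 : (m₁ : ℤ) + m₂ = (m₃ : ℤ) + m₄ := by exact_mod_cast hsum'
      linear_combination h1 - (m₃ : ℤ) * h2
    rcases mul_eq_zero.mp hz with hz1 | hz2
    · have hm31 : m₃ = m₁ := by omega
      have hm42 : m₄ = m₂ := by omega
      have e13 : t₁ = t₃ := t_eq ht₁ ht₃ hr₁ hr₃ (k := m₁)
        (by rw [← hd₁, ← hd₃, hm31]; ring)
      have e24 : t₂ = t₄ := t_eq ht₂ ht₄ hr₂ hr₄ (k := m₂)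
        (by rw [← hd₂, ← hd₄, hm42]; ring)
      exact card_helper (Or.inr (Or.inl ⟨e13, e24⟩))
    · have hm32 : m₃ = m₂ := by omega
      have hm41 : m₄ = m₁ := by omega
      have e14 : t₁ = t₄ := t_eq ht₁ ht₄ hr₁ hr₄ (k := m₁)
        (by rw [← hd₁, ← hd₄, hm41]; ring)
      have e23 : t₂ = t₃ := t_eq ht₂ ht₃ hr₂ hr₃ (k := m₂)
        (by rw [← hd₂, ← hd₃, hm32]; ring)
      exact card_helper (Or.inr (Or.inr ⟨e14, e23⟩))
  · -- n ≠ 0 : both products are perfect squares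
    have h4 : 4 * ((m₁ : ℝ) * m₂) = (n : ℝ) ^ 2
        + 4 * (n : ℝ) * ((e₃ : ℝ) * e₄) * Real.sqrt ((m₃ : ℝ) * m₄)
        + 4 * ((m₃ : ℝ) * m₄) := by
      linear_combination (2 * ((e₁ : ℝ) * e₂) * Real.sqrt ((m₁ : ℝ) * m₂)
          + 2 * ((e₃ : ℝ) * e₄) * Real.sqrt ((m₃ : ℝ) * m₄) + (n : ℝ)) * key2
        - 4 * ((e₁ : ℝ) * e₂) ^ 2 * hP2 + 4 * ((e₃ : ℝ) * e₄) ^ 2 * hQ2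
        - 4 * ((m₁ : ℝ) * m₂) * hu2 + 4 * ((m₃ : ℝ) * m₄) * hv2
    have hb1 : 4 * n * (e₃ * e₄) ≠ 0 := by
      rcases he₃ with rfl | rfl <;> rcases he₄ with rfl | rfl <;> simpa using h0
    obtain ⟨k, hk⟩ : ∃ k : ℕ, m₃ * m₄ = k ^ 2 := by
      apply sq_of_int_sqrt (m₃ * m₄) (4 * (m₁ : ℤ) * m₂ - n ^ 2 - 4 * m₃ * m₄)
        (4 * n * (e₃ * e₄)) hb1
      push_cast
      linear_combination -h4
    have e34 : t₃ = t₄ := t_eq ht₃ ht₄ hr₃ hr₄ (k := k) (by rw [← hd₃, ← hd₄]; exact hk)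
    have hQk : Real.sqrt ((m₃ : ℝ) * m₄) = (k : ℝ) := by
      have : ((m₃ : ℝ) * m₄) = ((k : ℝ)) ^ 2 := by exact_mod_cast hk
      rw [this]
      exact Real.sqrt_sq (by positivity)
    have hb2 : 2 * (e₁ * e₂) ≠ 0 := by
      rcases he₁ with rfl | rfl <;> rcases he₂ with rfl | rfl <;> norm_num
    obtain ⟨j, hj⟩ : ∃ j : ℕ, m₁ * m₂ = j ^ 2 := by
      apply sq_of_int_sqrt (m₁ * m₂) (n + 2 * (e₃ * e₄) * k) (2 * (e₁ * e₂)) hb2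
      push_cast
      linear_combination key2 + 2 * ((e₃ : ℝ) * e₄) * hQk
    have e12 : t₁ = t₂ := t_eq ht₁ ht₂ hr₁ hr₂ (k := j) (by rw [← hd₁, ← hd₂]; exact hj)
    exact card_helper (Or.inl ⟨e12, e34⟩)
end
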